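/- arXiv:1902.07941 — 9 statements merged into one kernel-verified Lean document; each statement's English description precedes it below -/
import Mathlib

section
/- If Φ : Mₘ(ℂ) → Mₙ(ℂ) is a strictly positive linear map (maps positive definite matrices to positive definite matrices), then for all positive definite matrices X, Y one has Φ(X ! Y) ≤ Φ(X) ! Φ(Y), where ! denotes the harmonic mean and ≤ is the Loewner order. -/
/-!
Write `A : B = (A⁻¹ + B⁻¹)⁻¹` for the parallel sum, so that `X ! Y = (2 • X) : (2 • Y)`.
Two positive definite matrices are simultaneously congruent to diagonal ones,
`A = V Vᴴ` and `B = V diag(b) Vᴴ`, and then `A : B = V diag((1 + b⁻¹)⁻¹) Vᴴ`. On matrices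
`V D Vᴴ` with `D` diagonal, `Φ` is a combination of the positive semidefinite matrices
`Φ (V Eⱼⱼ Vᴴ)` with the diagonal entries of `D` as coefficients, so the scalar inequality
`(a⁻¹ + b⁻¹)⁻¹ ⟪x + y, Q (x + y)⟫ ≤ a ⟪x, Q x⟫ + b ⟪y, Q y⟫` for `Q ≥ 0` sums to
`⟪x + y, Φ (A : B) (x + y)⟫ ≤ ⟪x, Φ A x⟫ + ⟪y, Φ B y⟫`. For a suitable splitting `w = x + y`
the right-hand side is `⟪w, (Φ A : Φ B) w⟫`.
-/

open Matrix ComplexOrder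
open scoped MatrixOrder

namespace Matrix

section Field

variable {K n : Type*} [Field K] [Fintype n] [DecidableEq n]

noncomputable def parallelSum (A B : Matrix n n K) : Matrix n n K := (A⁻¹ + B⁻¹)⁻¹

lemma inv_smul_of_ne_zero {c : K} (hc : c ≠ 0) (A : Matrix n n K) : (c • A)⁻¹ = c⁻¹ • A⁻¹ := by
  have hc1 : (c • (1 : Matrix n n K))⁻¹ = c⁻¹ • 1 := inv_eq_left_inv (by simp [smul_smul, hc])
  rw [← smul_one_mul, mul_inv_rev, hc1, mul_smul_one]

lemma parallelSum_smul_smul {c : K} (hc : c ≠ 0) (A B : Matrix n n K) :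
    parallelSum (c • A) (c • B) = (c⁻¹ • (A⁻¹ + B⁻¹))⁻¹ := by
  rw [parallelSum, inv_smul_of_ne_zero hc, inv_smul_of_ne_zero hc, smul_add]

lemma inv_mul_diagonal_mul (A B : Matrix n n K) {d : n → K} (hd : ∀ j, d j ≠ 0) :
    (A * diagonal d * B)⁻¹ = B⁻¹ * diagonal d⁻¹ * A⁻¹ := by
  have hdiag : (diagonal d)⁻¹ = diagonal d⁻¹ := inv_eq_left_inv (by simp [hd])
  rw [mul_inv_rev, mul_inv_rev, hdiag, Matrix.mul_assoc]

lemma parallelSum_mul_diagonal_mul {A B : Matrix n n K} (hA : IsUnit A.det) (hB : IsUnit B.det)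
    {a b : n → K} (ha : ∀ j, a j ≠ 0) (hb : ∀ j, b j ≠ 0) (hab : ∀ j, (a⁻¹ + b⁻¹) j ≠ 0) :
    parallelSum (A * diagonal a * B) (A * diagonal b * B) = A * diagonal (a⁻¹ + b⁻¹)⁻¹ * B := by
  rw [parallelSum, inv_mul_diagonal_mul _ _ ha, inv_mul_diagonal_mul _ _ hb, ← Matrix.add_mul,
    ← Matrix.mul_add, show diagonal a⁻¹ + diagonal b⁻¹ = diagonal (a⁻¹ + b⁻¹) from diagonal_add _ _,
    inv_mul_diagonal_mul _ _ hab, nonsing_inv_nonsing_inv _ hA, nonsing_inv_nonsing_inv _ hB]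

end Field

variable {𝕜 n : Type*} [RCLike 𝕜] [Fintype n]

open Filter Topology in
lemma PosSemidef.map_of_map_posDef {m : Type*} [DecidableEq m]
    (Φ : Matrix m m 𝕜 →ₗ[𝕜] Matrix n n 𝕜) (hΦ : ∀ A, A.PosDef → (Φ A).PosDef)
    {P : Matrix m m 𝕜} (hP : P.PosSemidef) : (Φ P).PosSemidef := by
  have hPε (ε : ℝ) (hε : 0 < ε) : (Φ (P + (ε : 𝕜) • 1)).PosDef :=
    hΦ _ (PosDef.posSemidef_add hP (PosDef.one.smul (RCLike.ofReal_pos.2 hε)))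
  have hherm : (Φ P).IsHermitian := by
    simpa using (hΦ _ (PosDef.posSemidef_add hP PosDef.one)).isHermitian.sub
      (hΦ 1 PosDef.one).isHermitian
  refine .of_dotProduct_mulVec_nonneg hherm fun x => ?_
  have hcont : Continuous fun ε : ℝ => star x ⬝ᵥ Φ (P + (ε : 𝕜) • 1) *ᵥ x := by
    simp only [map_add, map_smul, add_mulVec, smul_mulVec, dotProduct_add, dotProduct_smul]
    fun_prop
  have hlim : Tendsto (fun ε : ℝ => star x ⬝ᵥ Φ (P + (ε : 𝕜) • 1) *ᵥ x) (𝓝[>] 0)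
      (𝓝 (star x ⬝ᵥ Φ P *ᵥ x)) :=
    (hcont.tendsto' 0 _ (by simp)).mono_left nhdsWithin_le_nhds
  exact ge_of_tendsto hlim (eventually_nhdsWithin_of_forall fun ε hε =>
    (hPε ε hε).posSemidef.dotProduct_mulVec_nonneg x)

lemma PosSemidef.dotProduct_mulVec_add_le {Q : Matrix n n 𝕜} (hQ : Q.PosSemidef) {a b : 𝕜}
    (ha : 0 < a) (hb : 0 < b) (x y : n → 𝕜) :
    (a⁻¹ + b⁻¹)⁻¹ * (star (x + y) ⬝ᵥ Q *ᵥ (x + y)) ≤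
      a * (star x ⬝ᵥ Q *ᵥ x) + b * (star y ⬝ᵥ Q *ᵥ y) := by
  have key : a * (star x ⬝ᵥ Q *ᵥ x) + b * (star y ⬝ᵥ Q *ᵥ y) -
      (a⁻¹ + b⁻¹)⁻¹ * (star (x + y) ⬝ᵥ Q *ᵥ (x + y)) =
      (a + b)⁻¹ * (star (a • x - b • y) ⬝ᵥ Q *ᵥ (a • x - b • y)) := by
    simp only [star_add, star_sub, star_smul, ha.le.star_eq, hb.le.star_eq, mulVec_add,
      mulVec_sub, mulVec_smul, dotProduct_add, add_dotProduct, dotProduct_sub, sub_dotProduct,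
      dotProduct_smul, smul_dotProduct, smul_eq_mul]
    field_simp
    ring
  rw [← sub_nonneg, key]
  exact mul_nonneg (inv_nonneg.2 (add_pos ha hb).le) (hQ.dotProduct_mulVec_nonneg _)

lemma dotProduct_mulVec_inv_add_inv_le {ι : Type*} [Fintype ι] [DecidableEq ι]
    (Ψ : (ι → 𝕜) →ₗ[𝕜] Matrix n n 𝕜) (hΨ : ∀ j, (Ψ (Pi.single j 1)).PosSemidef)
    {a b : ι → 𝕜} (ha : ∀ j, 0 < a j) (hb : ∀ j, 0 < b j) (x y : n → 𝕜) :
    star (x + y) ⬝ᵥ Ψ (a⁻¹ + b⁻¹)⁻¹ *ᵥ (x + y) ≤ star x ⬝ᵥ Ψ a *ᵥ x + star y ⬝ᵥ Ψ b *ᵥ y := by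
  have hform (c : ι → 𝕜) (z : n → 𝕜) :
      star z ⬝ᵥ Ψ c *ᵥ z = ∑ j, c j * (star z ⬝ᵥ Ψ (Pi.single j 1) *ᵥ z) := by
    have hc : c = ∑ j, c j • Pi.single j 1 := by
      simp_rw [← Pi.single_smul', smul_eq_mul, mul_one, Finset.univ_sum_single]
    conv_lhs => rw [hc]
    simp [sum_mulVec, dotProduct_sum, smul_mulVec, dotProduct_smul]
  rw [hform, hform, hform, ← Finset.sum_add_distrib]
  exact Finset.sum_le_sum fun j _ => (hΨ j).dotProduct_mulVec_add_le (ha j) (hb j) x y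

variable [DecidableEq n]

lemma PosDef.parallelSum {A B : Matrix n n 𝕜} (hA : A.PosDef) (hB : B.PosDef) :
    (parallelSum A B).PosDef :=
  (hA.inv.add hB.inv).inv

lemma le_parallelSum_of_forall {A B Z : Matrix n n 𝕜} (hA : A.PosDef) (hB : B.PosDef)
    (hZ : Z.IsHermitian)
    (h : ∀ x y, star (x + y) ⬝ᵥ Z *ᵥ (x + y) ≤ star x ⬝ᵥ A *ᵥ x + star y ⬝ᵥ B *ᵥ y) :
    Z ≤ parallelSum A B := by
  set P := parallelSum A B with hP
  have hdet {M : Matrix n n 𝕜} (hM : M.PosDef) : IsUnit M.det :=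
    (isUnit_iff_isUnit_det M).1 hM.isUnit
  refine le_iff.2 <|
    .of_dotProduct_mulVec_nonneg ((hA.parallelSum hB).isHermitian.sub hZ) fun w => ?_
  -- the splitting `w = x + y` with `A x = B y = P w` attains the bound
  set x := A⁻¹ *ᵥ P *ᵥ w
  set y := B⁻¹ *ᵥ P *ᵥ w
  have hxy : x + y = w := by
    rw [← add_mulVec, mulVec_mulVec, hP, parallelSum, mul_nonsing_inv _ (hdet (hA.inv.add hB.inv)),
      one_mulVec]
  have hAx : A *ᵥ x = P *ᵥ w := by rw [mulVec_mulVec, mul_nonsing_inv _ (hdet hA), one_mulVec]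
  have hBy : B *ᵥ y = P *ᵥ w := by rw [mulVec_mulVec, mul_nonsing_inv _ (hdet hB), one_mulVec]
  have hw := h x y
  rw [hxy, hAx, hBy, ← add_dotProduct, ← star_add, hxy] at hw
  rwa [sub_mulVec, dotProduct_sub, sub_nonneg]

lemma PosDef.exists_eq_mul_diagonal_mul {A B : Matrix n n 𝕜} (hA : A.PosDef) (hB : B.PosDef) :
    ∃ V : Matrix n n 𝕜, IsUnit V.det ∧ ∃ b : n → 𝕜, (∀ j, 0 < b j) ∧
      A = V * Vᴴ ∧ B = V * diagonal b * Vᴴ := by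
  set R := CFC.sqrt A
  have hR : R.IsHermitian := (nonneg_iff_posSemidef.1 (CFC.sqrt_nonneg A)).isHermitian
  have hRR : R * R = A := CFC.sqrt_mul_sqrt_self A (nonneg_iff_posSemidef.2 hA.posSemidef)
  have hRdet : IsUnit R.det := isUnit_of_mul_isUnit_left (by
    rw [← det_mul, hRR]; exact (isUnit_iff_isUnit_det A).1 hA.isUnit)
  have hC : (R⁻¹ * B * R⁻¹).PosDef := by
    have := hB.mul_mul_conjTranspose_same (B := R⁻¹)
      (vecMul_injective_iff_isUnit.2 ((isUnit_iff_isUnit_det _).2 (isUnit_nonsing_inv_det _ hRdet)))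
    rwa [conjTranspose_nonsing_inv, hR.eq] at this
  set U : Matrix n n 𝕜 := (hC.isHermitian.eigenvectorUnitary : Matrix n n 𝕜)
  have hU : U ∈ unitaryGroup n 𝕜 := hC.isHermitian.eigenvectorUnitary.2
  refine ⟨R * U, ?_, RCLike.ofReal ∘ hC.isHermitian.eigenvalues,
    fun j => RCLike.ofReal_pos.2 (hC.eigenvalues_pos j), ?_, ?_⟩
  · rw [det_mul]
    exact hRdet.mul (UnitaryGroup.det_isUnit ⟨U, hU⟩)
  · rw [conjTranspose_mul, hR.eq, ← star_eq_conjTranspose, Matrix.mul_assoc,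
      ← Matrix.mul_assoc U, Unitary.mul_star_self_of_mem hU, Matrix.one_mul, hRR]
  · have hspec : R⁻¹ * B * R⁻¹ =
        U * diagonal (RCLike.ofReal ∘ hC.isHermitian.eigenvalues) * star U :=
      hC.isHermitian.spectral_theorem
    rw [conjTranspose_mul, hR.eq, ← star_eq_conjTranspose]
    calc B = R * (R⁻¹ * B * R⁻¹) * R := by
          simp only [Matrix.mul_assoc, nonsing_inv_mul _ hRdet, Matrix.mul_one,
            mul_nonsing_inv_cancel_left _ _ hRdet]
      _ = R * (U * diagonal (RCLike.ofReal ∘ hC.isHermitian.eigenvalues) * star U) * R :=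
          congrArg (R * · * R) hspec
      _ = _ := by simp only [Matrix.mul_assoc]

theorem map_parallelSum_le {m : Type*} [Fintype m] [DecidableEq m]
    (Φ : Matrix m m 𝕜 →ₗ[𝕜] Matrix n n 𝕜) (hΦ : ∀ P, P.PosSemidef → (Φ P).PosSemidef)
    {A B : Matrix m m 𝕜} (hA : A.PosDef) (hB : B.PosDef) (hΦA : (Φ A).PosDef)
    (hΦB : (Φ B).PosDef) : Φ (parallelSum A B) ≤ parallelSum (Φ A) (Φ B) := by
  have hZ := (hΦ _ (hA.parallelSum hB).posSemidef).isHermitian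
  obtain ⟨V, hV, b, hb, rfl, rfl⟩ := hA.exists_eq_mul_diagonal_mul hB
  have hVH : IsUnit Vᴴ.det := (det_conjTranspose V).symm ▸ hV.star
  rw [show V * Vᴴ = V * diagonal 1 * Vᴴ by simp] at hZ hΦA ⊢
  rw [parallelSum_mul_diagonal_mul (a := 1) hV hVH (fun _ => one_ne_zero) (fun j => (hb j).ne')
    (fun j => (add_pos (inv_pos.2 one_pos) (inv_pos.2 (hb j))).ne')] at hZ ⊢
  refine le_parallelSum_of_forall hΦA hΦB hZ fun x y => ?_
  let Ψ : (m → 𝕜) →ₗ[𝕜] Matrix n n 𝕜 :=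
    Φ ∘ₗ LinearMap.mulLeft 𝕜 V ∘ₗ LinearMap.mulRight 𝕜 Vᴴ ∘ₗ diagonalLinearMap m 𝕜 𝕜
  have hΨ (c : m → 𝕜) : Ψ c = Φ (V * diagonal c * Vᴴ) := by simp [Ψ, Matrix.mul_assoc]
  have hΨpos (j : m) : (Ψ (Pi.single j 1)).PosSemidef := by
    rw [hΨ]
    exact hΦ _ ((PosSemidef.diagonal (Pi.single_nonneg.2 zero_le_one)).mul_mul_conjTranspose_same V)
  simpa only [hΨ] using
    dotProduct_mulVec_inv_add_inv_le Ψ hΨpos (a := 1) (fun _ => one_pos) hb x y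

end Matrix

/-- A strictly positive linear map is subadditive with respect to the
harmonic mean: `Φ(X ! Y) ≤ Φ(X) ! Φ(Y)` in the Loewner order. -/
theorem posMap_harmonic_mean {m n : ℕ}
    (Φ : Matrix (Fin m) (Fin m) ℂ →ₗ[ℂ] Matrix (Fin n) (Fin n) ℂ)
    (hΦ : ∀ A : Matrix (Fin m) (Fin m) ℂ, A.PosDef → (Φ A).PosDef)
    (X Y : Matrix (Fin m) (Fin m) ℂ) (hX : X.PosDef) (hY : Y.PosDef) :
    (((2 : ℂ)⁻¹ • ((Φ X)⁻¹ + (Φ Y)⁻¹))⁻¹ -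
      Φ (((2 : ℂ)⁻¹ • (X⁻¹ + Y⁻¹))⁻¹)).PosSemidef := by
  have h2 : (0 : ℂ) < 2 := by norm_num
  have key := map_parallelSum_le Φ (fun P hP => hP.map_of_map_posDef Φ hΦ) (hX.smul h2)
    (hY.smul h2) (hΦ _ (hX.smul h2)) (hΦ _ (hY.smul h2))
  rwa [map_smul, map_smul, parallelSum_smul_smul two_ne_zero,
    parallelSum_smul_smul two_ne_zero] at key
end

section
/- If Φ : Mₘ(ℂ) → Mₙ(ℂ) is a positive linear map and X, Y are positive definite matrices with Φ(X) and Φ(X+Y) invertible, then Φ(X(X+Y)⁻¹X) ≥ Φ(X)Φ(X+Y)⁻¹Φ(X) in the Loewner order. -/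
/-! Simultaneously diagonalise `X = V Vᴴ` and `X + Y = V diag(d) Vᴴ` with `d > 0`, so that
`X (X + Y)⁻¹ X = V diag(d⁻¹) Vᴴ`. For the positive matrices `Qᵢ = Φ (V Eᵢᵢ Vᴴ)`, the images
of `X`, `X + Y` and `X (X + Y)⁻¹ X` are `∑ Qᵢ`, `∑ dᵢ Qᵢ` and `∑ dᵢ⁻¹ Qᵢ`. Each block matrix
`[[dᵢ⁻¹ Qᵢ, Qᵢ], [Qᵢ, dᵢ Qᵢ]]` is positive semidefinite, hence so is their sum, and the
inequality is the positivity of its Schur complement. Only the commuting family `V Eᵢᵢ Vᴴ`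
is pushed through `Φ`, which is why positivity of `Φ` suffices. -/

open Matrix ComplexOrder

theorem LinearMap.map_mul_diagonal_mul {R M l m n : Type*} [CommSemiring R] [AddCommMonoid M]
    [Module R M] [Fintype l] [DecidableEq l] (Φ : Matrix m n R →ₗ[R] M) (V : Matrix m l R)
    (W : Matrix l n R) (c : l → R) :
    Φ (V * diagonal c * W) = ∑ i, c i • Φ (V * Matrix.single i i (1 : R) * W) := by
  rw [← sum_single_eq_diagonal, Matrix.mul_sum, Matrix.sum_mul, map_sum]
  refine Finset.sum_congr rfl fun i _ => ?_
  rw [← map_smul, ← Matrix.smul_mul, ← Matrix.mul_smul, smul_single, smul_eq_mul, mul_one]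

namespace Matrix

theorem fromBlocks_sum {ι l m n o α : Type*} [AddCommMonoid α] (s : Finset ι)
    (A : ι → Matrix n l α) (B : ι → Matrix n m α) (C : ι → Matrix o l α)
    (D : ι → Matrix o m α) :
    fromBlocks (∑ i ∈ s, A i) (∑ i ∈ s, B i) (∑ i ∈ s, C i) (∑ i ∈ s, D i) =
      ∑ i ∈ s, fromBlocks (A i) (B i) (C i) (D i) := by
  ext (j | j) (k | k) <;> simp [Matrix.sum_apply]

variable {𝕜 n : Type*} [RCLike 𝕜]

theorem posSemidef_single_self_one [DecidableEq n] (i : n) : (single i i (1 : 𝕜)).PosSemidef := by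
  rw [← diagonal_single]
  exact PosSemidef.diagonal (Pi.single_nonneg.mpr zero_le_one)

variable [Fintype n]

theorem PosSemidef.fromBlocks_inv_smul_smul {Q : Matrix n n 𝕜} (hQ : Q.PosSemidef) {c : ℝ}
    (hc : 0 < c) : (fromBlocks ((c⁻¹ : 𝕜) • Q) Q Q ((c : 𝕜) • Q)).PosSemidef := by
  classical
  have hc' : (c : 𝕜) ≠ 0 := RCLike.ofReal_ne_zero.mpr hc.ne'
  set A : Matrix n (n ⊕ n) 𝕜 := fromCols 1 ((c : 𝕜) • 1)
  have hfactor : fromBlocks ((c⁻¹ : 𝕜) • Q) Q Q ((c : 𝕜) • Q) = (c⁻¹ : ℝ) • (Aᴴ * Q * A) := by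
    rw [conjTranspose_fromCols_eq_fromRows_conjTranspose, fromRows_mul, fromRows_mul_fromCols]
    ext (i | i) (j | j) <;> simp [hc', RCLike.real_smul_eq_coe_mul]
  rw [hfactor]
  exact (hQ.conjTranspose_mul_mul_same A).smul (inv_nonneg.mpr hc.le)

theorem posSemidef_sum_inv_smul_sub_mul_inv_mul {ι : Type*} [Fintype ι] [DecidableEq n]
    {Q : ι → Matrix n n 𝕜} (hQ : ∀ i, (Q i).PosSemidef) {d : ι → ℝ} (hd : ∀ i, 0 < d i)
    (hB : IsUnit (∑ i, (d i : 𝕜) • Q i)) :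
    (∑ i, (d i : 𝕜)⁻¹ • Q i -
      (∑ i, Q i) * (∑ i, (d i : 𝕜) • Q i)⁻¹ * (∑ i, Q i)).PosSemidef := by
  have hB' : (∑ i, (d i : 𝕜) • Q i).PosDef := by
    refine (posSemidef_sum _ fun i _ => ?_).posDef_iff_isUnit.mpr hB
    simpa [RCLike.real_smul_eq_coe_smul] using (hQ i).smul (hd i).le
  have hE : (∑ i, Q i)ᴴ = ∑ i, Q i := (posSemidef_sum _ fun i _ => hQ i).isHermitian.eq
  have := hB'.isUnit.invertible
  have h := (PosDef.fromBlocks₂₂ (∑ i, (d i : 𝕜)⁻¹ • Q i) (∑ i, Q i) hB').mp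
  rw [hE, fromBlocks_sum] at h
  exact h <| posSemidef_sum _ fun i _ => (hQ i).fromBlocks_inv_smul_smul (hd i)

variable [DecidableEq n]

open scoped MatrixOrder in
theorem PosDef.exists_simultaneous_diagonalization {X Z : Matrix n n 𝕜} (hX : X.PosDef)
    (hZ : Z.PosDef) : ∃ (V : Matrix n n 𝕜) (d : n → ℝ), IsUnit V ∧ (∀ i, 0 < d i) ∧
      X = V * Vᴴ ∧ Z = V * diagonal (fun i => (d i : 𝕜)) * Vᴴ := by
  obtain ⟨C, hC, rfl⟩ :=
    CStarAlgebra.isStrictlyPositive_iff_eq_mul_star_self.mp hX.isStrictlyPositive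
  have hM : (C⁻¹ * Z * star C⁻¹).PosDef :=
    (IsUnit.posDef_star_right_conjugate_iff (isUnit_nonsing_inv_iff.mpr hC)).mpr hZ
  obtain ⟨U, d, hd, hU⟩ : ∃ (U : unitaryGroup n 𝕜) (d : n → ℝ), (∀ i, 0 < d i) ∧
      C⁻¹ * Z * star C⁻¹ = U * diagonal (fun i => (d i : 𝕜)) * star U :=
    ⟨_, _, hM.eigenvalues_pos, hM.1.spectral_theorem⟩
  refine ⟨C * U, d, hC.mul Unitary.isUnit_coe, hd, ?_, ?_⟩
  · rw [conjTranspose_mul, ← star_eq_conjTranspose, ← star_eq_conjTranspose, mul_assoc,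
      ← mul_assoc (U : Matrix n n 𝕜), Unitary.mul_star_self_of_mem U.2, one_mul]
  · have hC' : IsUnit C.det := (isUnit_iff_isUnit_det C).mp hC
    have hZ : Z = C * (C⁻¹ * Z * star C⁻¹) * star C := by
      rw [← mul_assoc, ← mul_assoc, mul_nonsing_inv _ hC', one_mul, mul_assoc, ← star_mul,
        mul_nonsing_inv _ hC', star_one, mul_one]
    rw [hZ, hU]
    simp only [Unitary.coe_star, conjTranspose_mul, star_eq_conjTranspose, mul_assoc]

theorem mul_conjTranspose_mul_inv_mul {V : Matrix n n 𝕜} (hV : IsUnit V) {d : n → 𝕜}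
    (hd : ∀ i, d i ≠ 0) :
    V * Vᴴ * (V * diagonal d * Vᴴ)⁻¹ * (V * Vᴴ) = V * diagonal d⁻¹ * Vᴴ := by
  have hV' : IsUnit V.det := (isUnit_iff_isUnit_det V).mp hV
  have hVH' : IsUnit Vᴴ.det := (isUnit_iff_isUnit_det _).mp hV.star
  have hD : (diagonal d)⁻¹ = diagonal d⁻¹ := by
    refine inv_eq_left_inv ?_
    rw [diagonal_mul_diagonal, ← diagonal_one]
    exact congrArg diagonal (funext fun i => inv_mul_cancel₀ (hd i))
  rw [mul_inv_rev, mul_inv_rev, hD]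
  simp only [mul_assoc]
  rw [mul_nonsing_inv_cancel_left _ _ hVH', nonsing_inv_mul_cancel_left _ _ hV']

end Matrix

theorem posMap_schur_ineq_general {m n : ℕ}
    (Φ : Matrix (Fin m) (Fin m) ℂ →ₗ[ℂ] Matrix (Fin n) (Fin n) ℂ)
    (hΦ : ∀ A : Matrix (Fin m) (Fin m) ℂ, A.PosSemidef → (Φ A).PosSemidef)
    (X Y : Matrix (Fin m) (Fin m) ℂ) (hX : X.PosDef) (hY : Y.PosDef)
    (h2 : IsUnit (Φ (X + Y))) :
    (Φ (X * (X + Y)⁻¹ * X) - Φ X * (Φ (X + Y))⁻¹ * Φ X).PosSemidef := by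
  obtain ⟨V, d, hV, hd, hXV, hXYV⟩ := hX.exists_simultaneous_diagonalization (hX.add hY)
  set Q : Fin m → Matrix (Fin n) (Fin n) ℂ := fun i => Φ (V * single i i 1 * Vᴴ)
  have hQ (i : Fin m) : (Q i).PosSemidef :=
    hΦ _ ((posSemidef_single_self_one i).mul_mul_conjTranspose_same V)
  have hΦX : Φ X = ∑ i, Q i := by
    simpa [← hXV] using Φ.map_mul_diagonal_mul V Vᴴ 1
  have hΦXY : Φ (X + Y) = ∑ i, (d i : ℂ) • Q i := by
    rw [hXYV, Φ.map_mul_diagonal_mul]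
    rfl
  have hΦmid : Φ (X * (X + Y)⁻¹ * X) = ∑ i, (d i : ℂ)⁻¹ • Q i := by
    rw [hXYV, hXV, mul_conjTranspose_mul_inv_mul hV, Φ.map_mul_diagonal_mul]
    · rfl
    · exact fun i => RCLike.ofReal_ne_zero.mpr (hd i).ne'
  rw [hΦmid, hΦX, hΦXY]
  exact posSemidef_sum_inv_smul_sub_mul_inv_mul hQ hd (hΦXY ▸ h2)

/-- For a positive linear map `Φ` and positive definite `X, Y` with `Φ(X)` and
`Φ(X+Y)` invertible, `Φ(X(X+Y)⁻¹X) ≥ Φ(X)Φ(X+Y)⁻¹Φ(X)` in the Loewner order. -/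
theorem posMap_schur_ineq {m n : ℕ}
    (Φ : Matrix (Fin m) (Fin m) ℂ →ₗ[ℂ] Matrix (Fin n) (Fin n) ℂ)
    (hΦ : ∀ A : Matrix (Fin m) (Fin m) ℂ, A.PosSemidef → (Φ A).PosSemidef)
    (X Y : Matrix (Fin m) (Fin m) ℂ) (hX : X.PosDef) (hY : Y.PosDef)
    (h1 : IsUnit (Φ X)) (h2 : IsUnit (Φ (X + Y))) :
    (Φ (X * (X + Y)⁻¹ * X) - Φ X * (Φ (X + Y))⁻¹ * Φ X).PosSemidef :=
  posMap_schur_ineq_general Φ hΦ X Y hX hY h2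
end

section
/- If Φ : Mₘ(ℂ) → Mₙ(ℂ) is a unital positive linear map and T is a positive definite matrix, then Φ(T⁻¹) ≥ Φ(T)⁻¹ in the Loewner order (in particular Φ(T) is invertible). -/
open Matrix ComplexOrder

-- helper: nonneg real smul of PSD is PSD
lemma psd_smul_helper {n : ℕ} {Q : Matrix (Fin n) (Fin n) ℂ} (hQ : Q.PosSemidef)
    {c : ℝ} (hc : 0 ≤ c) : ((c : ℂ) • Q).PosSemidef := by
  have h : (c : ℂ) • Q
      = ((Real.sqrt c : ℂ) • (1 : Matrix (Fin n) (Fin n) ℂ)) * Q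
        * ((Real.sqrt c : ℂ) • (1 : Matrix (Fin n) (Fin n) ℂ))ᴴ := by
    simp [smul_mul_assoc, mul_smul_comm, conjTranspose_smul, smul_smul, ← Complex.ofReal_mul,
      Real.mul_self_sqrt hc]
  rw [h]
  exact hQ.mul_mul_conjTranspose_same _

-- helper: sum of PSD is PSD
lemma psd_sum_helper {n m : ℕ} (f : Fin m → Matrix (Fin n) (Fin n) ℂ)
    (hf : ∀ i, (f i).PosSemidef) : (∑ i, f i).PosSemidef :=
  Finset.sum_induction f _ (fun _ _ ha hb => ha.add hb) .zero (fun i _ => hf i)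

-- helper: expansion of conjugation
lemma conj_expand_helper {n : ℕ} (a b : ℝ) (X Q : Matrix (Fin n) (Fin n) ℂ)
    (hX : Xᴴ = X) :
    ((a:ℂ) • 1 - (b:ℂ) • X)ᴴ * Q * ((a:ℂ) • 1 - (b:ℂ) • X)
      = ((a*a : ℝ) : ℂ) • Q - ((a*b : ℝ) : ℂ) • (Q * X) - ((a*b : ℝ) : ℂ) • (X * Q)
        + ((b*b : ℝ) : ℂ) • (X * Q * X) := by
  simp only [conjTranspose_sub, conjTranspose_smul, conjTranspose_one, hX,
    Complex.star_def, Complex.conj_ofReal, sub_mul, mul_sub, smul_mul_assoc,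
    mul_smul_comm, one_mul, mul_one, smul_smul, Complex.ofReal_mul, mul_assoc]
  module

/-- Choi's inequality: for a unital positive linear map `Φ` and `T` positive
definite, `Φ(T)` is invertible and `Φ(T⁻¹) ≥ Φ(T)⁻¹` in the Loewner order. -/
theorem unital_posMap_inv_ineq {m n : ℕ}
    (Φ : Matrix (Fin m) (Fin m) ℂ →ₗ[ℂ] Matrix (Fin n) (Fin n) ℂ)
    (hΦ1 : Φ 1 = 1)
    (hΦ : ∀ A : Matrix (Fin m) (Fin m) ℂ, A.PosSemidef → (Φ A).PosSemidef)
    (T : Matrix (Fin m) (Fin m) ℂ) (hT : T.PosDef) :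
    IsUnit (Φ T) ∧ (Φ T⁻¹ - (Φ T)⁻¹).PosSemidef := by
  rcases Nat.eq_zero_or_pos m with hm | hm
  · subst hm
    have hT1 : T = 1 := by ext i; exact i.elim0
    have h1 : (1 : Matrix (Fin 0) (Fin 0) ℂ)⁻¹ = 1 := Matrix.inv_eq_left_inv (by simp)
    have h2 : (1 : Matrix (Fin n) (Fin n) ℂ)⁻¹ = 1 := Matrix.inv_eq_left_inv (by simp)
    rw [hT1, h1, hΦ1, h2, sub_self]
    exact ⟨isUnit_one, .zero⟩
  haveI : Nonempty (Fin m) := Fin.pos_iff_nonempty.mp hm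
  have hH : T.IsHermitian := hT.isHermitian
  set d : Fin m → ℝ := hH.eigenvalues with hd_def
  set U : Matrix (Fin m) (Fin m) ℂ := (hH.eigenvectorUnitary : Matrix (Fin m) (Fin m) ℂ) with hU_def
  have hd : ∀ i, 0 < d i := hT.eigenvalues_pos
  have hUU : U * Uᴴ = 1 := by
    rw [← Matrix.star_eq_conjTranspose]
    exact (Matrix.mem_unitaryGroup_iff).mp hH.eigenvectorUnitary.2
  have hUU' : Uᴴ * U = 1 := by
    rw [← Matrix.star_eq_conjTranspose]
    exact (Matrix.mem_unitaryGroup_iff').mp hH.eigenvectorUnitary.2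
  have hspec : T = U * diagonal (fun i => (d i : ℂ)) * Uᴴ := by
    have := hH.spectral_theorem
    rw [this]; rfl
  -- projections
  set P : Fin m → Matrix (Fin m) (Fin m) ℂ :=
    fun i => U * diagonal (Pi.single i 1) * Uᴴ with hP_def
  set Q : Fin m → Matrix (Fin n) (Fin n) ℂ := fun i => Φ (P i) with hQ_def
  have hQpsd : ∀ i, (Q i).PosSemidef := by
    intro i
    refine hΦ _ ?_
    exact (posSemidef_diagonal_iff.mpr (fun j => by
      rcases eq_or_ne j i with rfl | h
      · simp
      · simp [Pi.single_apply, h])).mul_mul_conjTranspose_same _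
  have hPsum : ∑ i, P i = 1 := by
    rw [hP_def]
    rw [← Finset.sum_mul, ← Finset.mul_sum]
    have : (∑ i, diagonal (Pi.single i (1:ℂ)) : Matrix (Fin m) (Fin m) ℂ) = 1 := by
      ext j k
      rcases eq_or_ne j k with rfl | h
      · simp [Matrix.sum_apply, diagonal_apply, Pi.single_apply]
      · simp [Matrix.sum_apply, diagonal_apply, Pi.single_apply, h, Matrix.one_apply_ne h]
    rw [this, mul_one, hUU]
  have hQsum : ∑ i, Q i = 1 := by
    rw [hQ_def]
    rw [← map_sum, hPsum, hΦ1]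
  -- expansion of Φ applied to conjugated diagonals
  have hexp : ∀ c : Fin m → ℂ, Φ (U * diagonal c * Uᴴ) = ∑ i, c i • Q i := by
    intro c
    have hdiag : diagonal c = ∑ i, c i • diagonal (Pi.single i (1:ℂ)) := by
      ext j k
      rcases eq_or_ne j k with rfl | h
      · simp [Matrix.sum_apply, diagonal_apply, Pi.single_apply]
      · simp [Matrix.sum_apply, diagonal_apply, Pi.single_apply, h]
    rw [hdiag, Finset.mul_sum, Finset.sum_mul, map_sum]
    refine Finset.sum_congr rfl fun i _ => ?_
    rw [mul_smul_comm, smul_mul_assoc, _root_.map_smul]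
  have hΦT : Φ T = ∑ i, (d i : ℂ) • Q i := by rw [hspec, hexp]
  have hdne : ∀ i, (d i : ℂ) ≠ 0 := fun i => by
    exact_mod_cast (hd i).ne'
  have hDD : (diagonal (fun i => (d i : ℂ)) * diagonal (fun i => (((d i)⁻¹ : ℝ) : ℂ))
      : Matrix (Fin m) (Fin m) ℂ) = 1 := by
    rw [diagonal_mul_diagonal]
    have hfun : (fun i => (d i : ℂ) * (((d i)⁻¹ : ℝ) : ℂ)) = fun _ => (1:ℂ) := by
      funext i
      push_cast
      exact mul_inv_cancel₀ (hdne i)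
    rw [hfun, diagonal_one]
  have hTinv : T⁻¹ = U * diagonal (fun i => (((d i)⁻¹ : ℝ) : ℂ)) * Uᴴ := by
    apply Matrix.inv_eq_right_inv
    rw [hspec]
    simp only [Matrix.mul_assoc]
    rw [← Matrix.mul_assoc Uᴴ U, hUU', Matrix.one_mul,
      ← Matrix.mul_assoc (diagonal fun i => (d i : ℂ)), hDD, Matrix.one_mul, hUU]
  have hΦTinv : Φ T⁻¹ = ∑ i, (((d i)⁻¹ : ℝ) : ℂ) • Q i := by rw [hTinv, hexp]
  -- Φ T is positive definite
  obtain ⟨c, hc, hcle⟩ : ∃ c : ℝ, 0 < c ∧ ∀ i, c ≤ d i := by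
    refine ⟨Finset.univ.inf' Finset.univ_nonempty d, ?_, fun i => Finset.inf'_le _ (Finset.mem_univ i)⟩
    rw [Finset.lt_inf'_iff]
    exact fun i _ => hd i
  have hPD : (Φ T).PosDef := by
    have h1 : (Φ T - (c : ℂ) • 1).PosSemidef := by
      have heq : Φ T - (c : ℂ) • 1 = ∑ i, ((d i - c : ℝ) : ℂ) • Q i := by
        rw [hΦT, ← hQsum, Finset.smul_sum, ← Finset.sum_sub_distrib]
        refine Finset.sum_congr rfl fun i _ => ?_
        rw [← sub_smul]
        push_cast
        ring_nf
      rw [heq]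
      exact psd_sum_helper _ fun i => psd_smul_helper (hQpsd i) (sub_nonneg.mpr (hcle i))
    have h2 : ((c : ℂ) • (1 : Matrix (Fin n) (Fin n) ℂ)).PosDef := by
      have heq : (c : ℂ) • (1 : Matrix (Fin n) (Fin n) ℂ) = diagonal (fun _ => (c : ℂ)) := by
        ext j k
        rcases eq_or_ne j k with rfl | h
        · simp
        · simp [Matrix.one_apply_ne h, diagonal_apply_ne _ h]
      rw [heq]
      exact posDef_diagonal_iff.mpr fun _ => by exact_mod_cast hc
    have heq : Φ T = (Φ T - (c : ℂ) • 1) + (c : ℂ) • 1 := by abel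
    rw [heq]
    exact Matrix.PosDef.posSemidef_add h1 h2
  have hUnit : IsUnit (Φ T) := hPD.isUnit
  refine ⟨hUnit, ?_⟩
  set X : Matrix (Fin n) (Fin n) ℂ := (Φ T)⁻¹ with hX_def
  have hXH : Xᴴ = X := hPD.inv.isHermitian
  have hTX : Φ T * X = 1 := Matrix.mul_nonsing_inv _ ((Matrix.isUnit_iff_isUnit_det _).mp hUnit)
  set a : Fin m → ℝ := fun i => (Real.sqrt (d i))⁻¹ with ha_def
  set b : Fin m → ℝ := fun i => Real.sqrt (d i) with hb_def
  have hab : ∀ i, a i * b i = 1 := fun i =>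
    inv_mul_cancel₀ (Real.sqrt_ne_zero'.mpr (hd i))
  have haa : ∀ i, a i * a i = (d i)⁻¹ := fun i => by
    rw [ha_def, ← mul_inv, Real.mul_self_sqrt (hd i).le]
  have hbb : ∀ i, b i * b i = d i := fun i => Real.mul_self_sqrt (hd i).le
  have hterm : ∀ i, ((a i : ℂ) • 1 - (b i : ℂ) • X)ᴴ * Q i * ((a i : ℂ) • 1 - (b i : ℂ) • X)
      = (((d i)⁻¹ : ℝ) : ℂ) • Q i - (Q i * X) - (X * Q i) + ((d i : ℝ) : ℂ) • (X * Q i * X) := by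
    intro i
    rw [conj_expand_helper _ _ _ _ hXH, haa i, hab i, hbb i]
    norm_num
  have hfinal : (∑ i, ((a i : ℂ) • 1 - (b i : ℂ) • X)ᴴ * Q i * ((a i : ℂ) • 1 - (b i : ℂ) • X))
      = Φ T⁻¹ - X := by
    rw [Finset.sum_congr rfl fun i _ => hterm i]
    rw [Finset.sum_add_distrib, Finset.sum_sub_distrib, Finset.sum_sub_distrib]
    rw [← Finset.sum_mul, ← Finset.mul_sum, hQsum, Matrix.one_mul, Matrix.mul_one]
    have h4 : ∑ i, ((d i : ℝ) : ℂ) • (X * Q i * X) = X := by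
      have heq : ∑ i, ((d i : ℝ) : ℂ) • (X * Q i * X) = X * (∑ i, (d i : ℂ) • Q i) * X := by
        rw [Finset.mul_sum, Finset.sum_mul]
        refine Finset.sum_congr rfl fun i _ => ?_
        rw [mul_smul_comm, smul_mul_assoc]
      rw [heq, ← hΦT, Matrix.mul_assoc, hTX, Matrix.mul_one]
    rw [h4, ← hΦTinv]
    abel
  rw [← hfinal]
  exact psd_sum_helper _ fun i => (hQpsd i).conjTranspose_mul_mul_same _
end

section
/- For every λ ≥ 0, the function f(x) = 1/(λ + x) on (0,∞) satisfies the harmonic-mean–arithmetic-mean inequality of operator log-convexity: for positive definite matrices X and Y, f((X+Y)/2) ≤ f(X) ! f(Y), where A ! B = ((A⁻¹+B⁻¹)/2)⁻¹ and f is applied by functional calculus. -/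
open Matrix ComplexOrder

/-! The resolvent is an inverse, so the harmonic mean of `f X = (λ + X)⁻¹` and `f Y = (λ + Y)⁻¹`
is the inverse of the arithmetic mean of `λ + X` and `λ + Y`, which is `λ + (X + Y) / 2`:
the inequality holds with equality. -/

theorem Matrix.PosDef.smul_one_add {m 𝕜 : Type*} [Fintype m] [DecidableEq m] [RCLike 𝕜]
    {X : Matrix m m 𝕜} (hX : X.PosDef) {c : 𝕜} (hc : 0 ≤ c) : (c • 1 + X).PosDef :=
  PosDef.posSemidef_add (PosSemidef.one.smul hc) hX

/-- For `f(x) = 1/(λ+x)` with `λ ≥ 0`, `f((X+Y)/2) ≤ f(X) ! f(Y)`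
(the harmonic mean) in the Loewner order, for positive definite `X, Y`. -/
theorem resolvent_harmonic_arith {n : ℕ} (l : ℝ) (hl : 0 ≤ l)
    (X Y : Matrix (Fin n) (Fin n) ℂ) (hX : X.PosDef) (hY : Y.PosDef) :
    (((2 : ℂ)⁻¹ • ((((l : ℂ) • 1 + X)⁻¹)⁻¹ + (((l : ℂ) • 1 + Y)⁻¹)⁻¹))⁻¹ -
      ((l : ℂ) • 1 + (2 : ℂ)⁻¹ • (X + Y))⁻¹).PosSemidef := by
  have hl' : (0 : ℂ) ≤ l := Complex.zero_le_real.mpr hl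
  have arith_mean : (2 : ℂ)⁻¹ • ((l : ℂ) • 1 + X + ((l : ℂ) • 1 + Y)) =
      (l : ℂ) • 1 + (2 : ℂ)⁻¹ • (X + Y) := by
    match_scalars <;> ring
  rw [nonsing_inv_nonsing_inv _ (hX.smul_one_add hl').det_pos.ne'.isUnit,
    nonsing_inv_nonsing_inv _ (hY.smul_one_add hl').det_pos.ne'.isUnit, arith_mean, sub_self]
  exact PosSemidef.zero
end

section
/- For positive definite matrices A and B, the harmonic mean is dominated by the geometric mean: ((A⁻¹+B⁻¹)/2)⁻¹ ≤ A^{1/2}(A^{−1/2} B A^{−1/2})^{1/2} A^{1/2} in the Loewner order. -/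
/-!
Both means are congruence invariant: conjugating by `S = A^{1/2}` turns the pair `(A, B)` into
`(1, C)` with `C = A^{-1/2} B A^{-1/2}`. For this pair both means are functions of the single
matrix `C`, so by the continuous functional calculus the claim reduces to the scalar inequality
`2x / (1 + x) ≤ √x` for `x > 0`.
-/

open Matrix ComplexOrder
open scoped MatrixOrder

lemma Real.inv_two_inv_mul_one_add_inv_le_sqrt {x : ℝ} (hx : 0 < x) :
    (2⁻¹ * (1 + x⁻¹))⁻¹ ≤ √x := by
  have hs : √x * √x = x := Real.mul_self_sqrt hx.le
  have hs0 : 0 < √x := Real.sqrt_pos.mpr hx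
  rw [show (2⁻¹ * (1 + x⁻¹))⁻¹ = 2 * x / (x + 1) by field_simp, div_le_iff₀ (by positivity)]
  nlinarith [sq_nonneg (√x - 1)]

namespace Matrix

variable {n 𝕜 : Type*} [Fintype n] [DecidableEq n]

theorem inv_smul_inv_add_inv_conj {α : Type*} [CommRing α] (c : α) {S T : Matrix n n α}
    (hS : IsUnit S.det) (hT : IsUnit T.det) (X Y : Matrix n n α) :
    (c • ((S * X * T)⁻¹ + (S * Y * T)⁻¹))⁻¹ = S * (c • (X⁻¹ + Y⁻¹))⁻¹ * T := by
  have : c • ((S * X * T)⁻¹ + (S * Y * T)⁻¹) = T⁻¹ * (c • (X⁻¹ + Y⁻¹)) * S⁻¹ := by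
    simp only [mul_inv_rev, Matrix.mul_add, Matrix.add_mul, Matrix.mul_smul, Matrix.smul_mul,
      mul_assoc]
  rw [this, mul_inv_rev, mul_inv_rev, nonsing_inv_nonsing_inv _ hS, nonsing_inv_nonsing_inv _ hT,
    mul_assoc]

variable [RCLike 𝕜]

lemma PosSemidef.cfc_sqrt_mul_self {A : Matrix n n 𝕜} (hA : A.PosSemidef) :
    cfc Real.sqrt A * cfc Real.sqrt A = A := by
  rw [← cfcₙ_eq_cfc (hf0 := Real.sqrt_zero), ← CFC.sqrt_eq_real_sqrt A hA.nonneg,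
    CFC.sqrt_mul_sqrt_self A hA.nonneg]

lemma PosDef.isUnit_cfc_sqrt {A : Matrix n n 𝕜} (hA : A.PosDef) : IsUnit (cfc Real.sqrt A) :=
  isUnit_of_mul_isUnit_left (hA.posSemidef.cfc_sqrt_mul_self ▸ hA.isUnit)

lemma IsHermitian.cfc_inv_two_inv_mul_one_add_inv {C : Matrix n n 𝕜} (hC : C.IsHermitian)
    (hCu : IsUnit C) :
    cfc (fun x : ℝ => 2⁻¹ * (1 + x⁻¹)) C = (2 : 𝕜)⁻¹ • (1 + C⁻¹) := by
  have hcont : ContinuousOn (fun x : ℝ => x⁻¹) (spectrum ℝ C) :=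
    continuousOn_inv₀.mono fun x hx => ne_of_mem_of_not_mem hx (spectrum.zero_notMem ℝ hCu)
  have hinv : cfc (fun x : ℝ => x⁻¹) C = C⁻¹ := by
    rw [cfc_ringInverse_id (R := ℝ) (ha_unit := hCu), nonsing_inv_eq_ringInverse]
  rw [cfc_const_mul 2⁻¹ (fun x : ℝ => 1 + x⁻¹) C (continuousOn_const.add hcont),
    cfc_const_add 1 (fun x : ℝ => x⁻¹) C hcont, hinv, Algebra.algebraMap_eq_smul_one, one_smul,
    RCLike.real_smul_eq_coe_smul (K := 𝕜), RCLike.ofReal_inv, RCLike.ofReal_ofNat]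

lemma PosDef.inv_smul_one_add_inv_le_cfc_sqrt {C : Matrix n n 𝕜} (hC : C.PosDef) :
    ((2 : 𝕜)⁻¹ • (1 + C⁻¹))⁻¹ ≤ cfc Real.sqrt C := by
  have hspec : ∀ x ∈ spectrum ℝ C, 0 < x :=
    fun x hx => (isStrictlyPositive_iff_posDef.mpr hC).spectrum_pos hx
  have hmean_cont : ContinuousOn (fun x : ℝ => 2⁻¹ * (1 + x⁻¹)) (spectrum ℝ C) :=
    continuousOn_const.mul <| continuousOn_const.add <|
      continuousOn_inv₀.mono fun x hx => (hspec x hx).ne'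
  have hmean_ne : ∀ x ∈ spectrum ℝ C, 2⁻¹ * (1 + x⁻¹) ≠ 0 := fun x hx => by
    have := hspec x hx
    positivity
  rw [← hC.isHermitian.cfc_inv_two_inv_mul_one_add_inv hC.isUnit, nonsing_inv_eq_ringInverse,
    ← cfc_inv _ C hmean_ne hmean_cont, ← sub_nonneg,
    ← cfc_sub Real.sqrt (fun x : ℝ => (2⁻¹ * (1 + x⁻¹))⁻¹) C (hg := hmean_cont.inv₀ hmean_ne)]
  exact cfc_nonneg fun x hx =>
    sub_nonneg.mpr (Real.inv_two_inv_mul_one_add_inv_le_sqrt (hspec x hx))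

end Matrix

/-- The harmonic mean is dominated by the geometric mean, in the Loewner order. -/
theorem harmonic_le_geometric {n : ℕ} (A B : Matrix (Fin n) (Fin n) ℂ)
    (hA : A.PosDef) (hB : B.PosDef) :
    (cfc Real.sqrt A *
        cfc Real.sqrt ((cfc Real.sqrt A)⁻¹ * B * (cfc Real.sqrt A)⁻¹) *
        cfc Real.sqrt A -
      ((2 : ℂ)⁻¹ • (A⁻¹ + B⁻¹))⁻¹).PosSemidef := by
  set S := cfc Real.sqrt A
  set C := S⁻¹ * B * S⁻¹
  have hS : IsUnit S := hA.isUnit_cfc_sqrt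
  have hSdet : IsUnit S.det := (isUnit_iff_isUnit_det S).mp hS
  have hSH : S.IsHermitian := cfc_predicate _ _
  have hC : C.PosDef := by
    simpa only [star_eq_conjTranspose, conjTranspose_nonsing_inv, hSH.eq] using
      (IsUnit.posDef_star_right_conjugate_iff (isUnit_nonsing_inv_iff.mpr hS)).mpr hB
  have hA' : A = S * 1 * S := by rw [mul_one, hA.posSemidef.cfc_sqrt_mul_self]
  have hB' : B = S * C * S := by
    simp only [C, ← mul_assoc, mul_nonsing_inv _ hSdet, one_mul,
      nonsing_inv_mul_cancel_right _ _ hSdet]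
  have hH : ((2 : ℂ)⁻¹ • (A⁻¹ + B⁻¹))⁻¹ = S * ((2 : ℂ)⁻¹ • (1 + C⁻¹))⁻¹ * S := by
    rw [hA', hB', inv_smul_inv_add_inv_conj _ hSdet hSdet, inv_one]
  rw [hH]
  exact IsSelfAdjoint.conjugate_le_conjugate hC.inv_smul_one_add_inv_le_cfc_sqrt hSH
end

section
/- If Φ : Mₘ(ℂ) → Mₙ(ℂ) is a positive linear map and X, Y are positive definite matrices, then Φ(X # Y) ≤ Φ(X) # Φ(Y), where # is the geometric mean (assuming Φ(X), Φ(Y) positive definite). -/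
open Matrix ComplexOrder

/-- The geometric mean `A # B = A^{1/2} (A^{-1/2} B A^{-1/2})^{1/2} A^{1/2}`. -/
noncomputable def geoMean {n : ℕ} (A B : Matrix (Fin n) (Fin n) ℂ) :
    Matrix (Fin n) (Fin n) ℂ :=
  cfc Real.sqrt A * cfc Real.sqrt ((cfc Real.sqrt A)⁻¹ * B * (cfc Real.sqrt A)⁻¹) *
    cfc Real.sqrt A

/-!
Write `S = X^{1/2}`, `W = Φ(X)^{1/2}` and `T = (S⁻¹ Y S⁻¹)^{1/2}`, so that `X # Y = S T S` and
`Y = S T² S`. The map `Ψ Z = W⁻¹ Φ(S Z S) W⁻¹` is positive and unital, and `T` has finite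
spectrum, so Kadison's inequality `Ψ(T)² ≤ Ψ(T²)` holds: with the spectral decomposition
`T = ∑ λ P_λ` and `R_λ = Ψ(P_λ)`, one has `Ψ(T²) - Ψ(T)² = ∑ (λ - Ψ T) R_λ (λ - Ψ T) ≥ 0`.
Since `Ψ(T²) = W⁻¹ Φ(Y) W⁻¹`, operator monotonicity of the square root gives
`Ψ(T) ≤ (W⁻¹ Φ(Y) W⁻¹)^{1/2}`, and conjugating by `W` yields `Φ(X # Y) ≤ Φ(X) # Φ(Y)`.
-/

section

variable {B : Type*} [Ring B] [StarRing B] [Algebra ℝ B] [StarModule ℝ B]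
  [PartialOrder B] [StarOrderedRing B]

theorem sq_sum_smul_le_sum_sq_smul {ι : Type*} (s : Finset ι) {r : ι → B}
    (hr : ∀ i ∈ s, 0 ≤ r i) (hr1 : ∑ i ∈ s, r i = 1) (t : ι → ℝ) :
    (∑ i ∈ s, t i • r i) ^ 2 ≤ ∑ i ∈ s, t i ^ 2 • r i := by
  set c := ∑ i ∈ s, t i • r i
  have hc : IsSelfAdjoint c :=
    isSelfAdjoint_sum s fun i hi => (IsSelfAdjoint.all (t i)).smul (.of_nonneg (hr i hi))
  have expand (i : ι) : star (t i • 1 - c) * r i * (t i • 1 - c) =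
      t i ^ 2 • r i - c * (t i • r i) - (t i • r i) * c + c * r i * c := by
    simp only [star_sub, star_smul, star_one, hc.star_eq, star_trivial, sub_mul, mul_sub,
      smul_mul_assoc, mul_smul_comm, one_mul, mul_one, smul_sub, smul_smul, pow_two]
    abel
  have hsos : ∑ i ∈ s, t i ^ 2 • r i - c ^ 2 =
      ∑ i ∈ s, star (t i • 1 - c) * r i * (t i • 1 - c) := by
    simp only [expand, Finset.sum_add_distrib, Finset.sum_sub_distrib, ← Finset.mul_sum,
      ← Finset.sum_mul, hr1]
    noncomm_ring
  rw [← sub_nonneg, hsos]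
  exact Finset.sum_nonneg fun i hi => star_left_conjugate_nonneg (hr i hi) _

variable {A : Type*} [Ring A] [StarRing A] [Algebra ℝ A] [TopologicalSpace A]
  [ContinuousFunctionalCalculus ℝ A IsSelfAdjoint]

theorem cfc_eq_sum_smul_cfc_single {a : A} (hfin : (spectrum ℝ a).Finite) (f : ℝ → ℝ) :
    cfc f a = ∑ x ∈ hfin.toFinset, f x • cfc (Pi.single x 1) a := by
  have hf : Set.EqOn f (∑ x ∈ hfin.toFinset, f x • Pi.single x 1) (spectrum ℝ a) := by
    intro y hy
    simp [Pi.single_apply, hy]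
  rw [cfc_congr hf, cfc_sum _ _ _ fun _ _ => hfin.continuousOn _]
  exact Finset.sum_congr rfl fun x _ => cfc_smul (f x) (Pi.single x 1) a (hfin.continuousOn _)

theorem sq_map_le_map_sq_of_spectrum_finite [PartialOrder A] [StarOrderedRing A]
    (Ψ : A →ₗ[ℝ] B) (hΨ : ∀ a, 0 ≤ a → 0 ≤ Ψ a) (hΨ1 : Ψ 1 = 1) {a : A}
    (ha : IsSelfAdjoint a) (hfin : (spectrum ℝ a).Finite) :
    Ψ a ^ 2 ≤ Ψ (a ^ 2) := by
  have hsum (f : ℝ → ℝ) :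
      Ψ (cfc f a) = ∑ x ∈ hfin.toFinset, f x • Ψ (cfc (Pi.single x 1) a) := by
    simp only [cfc_eq_sum_smul_cfc_single hfin f, map_sum, map_smul]
  have h1 : Ψ a = ∑ x ∈ hfin.toFinset, x • Ψ (cfc (Pi.single x 1) a) := by
    rw [← hsum, cfc_id' ℝ a]
  have h2 : Ψ (a ^ 2) = ∑ x ∈ hfin.toFinset, x ^ 2 • Ψ (cfc (Pi.single x 1) a) := by
    rw [← hsum, cfc_pow_id a 2]
  have h0 : ∑ x ∈ hfin.toFinset, Ψ (cfc (Pi.single x 1) a) = 1 := by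
    simpa [cfc_const_one ℝ a, hΨ1] using (hsum fun _ => 1).symm
  rw [h1, h2]
  refine sq_sum_smul_le_sum_sq_smul _ (fun x _ => hΨ _ (cfc_nonneg fun y _ => ?_)) h0 _
  by_cases hy : y = x <;> simp [hy]
end

open scoped MatrixOrder

theorem CFC.le_sqrt_of_sq_le {A : Type*} [CStarAlgebra A] [PartialOrder A] [StarOrderedRing A]
    {c d : A} (hc : 0 ≤ c) (h : c ^ 2 ≤ d) : c ≤ CFC.sqrt d := by
  simpa [CFC.sqrt_sq c] using CFC.sqrt_le_sqrt _ _ h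

namespace Matrix

variable {ι : Type*} [Fintype ι] [DecidableEq ι]

theorem le_cfc_sqrt_of_sq_le {C D : Matrix ι ι ℂ} (hC : 0 ≤ C) (h : C ^ 2 ≤ D) :
    C ≤ cfc Real.sqrt D := by
  have hD : 0 ≤ D := (IsSelfAdjoint.of_nonneg hC).sq_nonneg.trans h
  rw [← cfcₙ_eq_cfc, ← CFC.sqrt_eq_real_sqrt D hD]
  open scoped Matrix.Norms.L2Operator in
  exact CFC.le_sqrt_of_sq_le hC h

theorem cfc_sqrt_sq {A : Matrix ι ι ℂ} (hA : 0 ≤ A) : cfc Real.sqrt A ^ 2 = A := by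
  rw [← cfcₙ_eq_cfc, ← CFC.sqrt_eq_real_sqrt A hA, CFC.sq_sqrt A]

theorem PosDef.isUnit_det_cfc_sqrt {A : Matrix ι ι ℂ} (hA : A.PosDef) :
    IsUnit (cfc Real.sqrt A).det := by
  rw [← isUnit_iff_isUnit_det, ← cfcₙ_eq_cfc, ← CFC.sqrt_eq_real_sqrt A hA.posSemidef.nonneg,
    CFC.isUnit_sqrt_iff_isStrictlyPositive]
  exact hA.isStrictlyPositive

theorem mul_conj_nonsing_inv_mul_cancel {A : Matrix ι ι ℂ} (hA : IsUnit A.det)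
    (B : Matrix ι ι ℂ) : A * (A⁻¹ * B * A⁻¹) * A = B := by
  rw [← mul_assoc, mul_nonsing_inv_cancel_left _ _ hA, nonsing_inv_mul_cancel_right _ _ hA]

end Matrix

theorem mul_mul_le_geoMean {n : ℕ} {A B C : Matrix (Fin n) (Fin n) ℂ} (hC : 0 ≤ C)
    (h : C ^ 2 ≤ (cfc Real.sqrt A)⁻¹ * B * (cfc Real.sqrt A)⁻¹) :
    cfc Real.sqrt A * C * cfc Real.sqrt A ≤ geoMean A B :=
  (cfc_predicate Real.sqrt A).conjugate_le_conjugate (le_cfc_sqrt_of_sq_le hC h)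

theorem posMap_geoMean_general {m n : ℕ}
    (Φ : Matrix (Fin m) (Fin m) ℂ →ₗ[ℂ] Matrix (Fin n) (Fin n) ℂ)
    (hΦ : ∀ A : Matrix (Fin m) (Fin m) ℂ, A.PosSemidef → (Φ A).PosSemidef)
    (X Y : Matrix (Fin m) (Fin m) ℂ) (hX : X.PosDef) (hY : Y.PosDef)
    (hXp : (Φ X).PosDef) :
    (geoMean (Φ X) (Φ Y) - Φ (geoMean X Y)).PosSemidef := by
  set S := cfc Real.sqrt X
  set W := cfc Real.sqrt (Φ X)
  set T := cfc Real.sqrt (S⁻¹ * Y * S⁻¹)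
  have hS : IsUnit S.det := hX.isUnit_det_cfc_sqrt
  have hW : IsUnit W.det := hXp.isUnit_det_cfc_sqrt
  have hSinv : IsSelfAdjoint S⁻¹ := (cfc_predicate Real.sqrt X).isHermitian.inv
  have hWinv : IsSelfAdjoint W⁻¹ := (cfc_predicate Real.sqrt (Φ X)).isHermitian.inv
  let Ψ := LinearMap.mulLeftRight ℝ (W⁻¹, W⁻¹) ∘ₗ Φ.restrictScalars ℝ ∘ₗ
    LinearMap.mulLeftRight ℝ (S, S)
  have hΨ_apply (Z) : Ψ Z = W⁻¹ * Φ (S * Z * S) * W⁻¹ := rfl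
  have hΨ (Z) (hZ : 0 ≤ Z) : 0 ≤ Ψ Z := by
    refine hWinv.conjugate_nonneg (nonneg_iff_posSemidef.mpr (hΦ _ ?_))
    exact nonneg_iff_posSemidef.mp ((cfc_predicate Real.sqrt X).conjugate_nonneg hZ)
  have hΨ1 : Ψ 1 = 1 := by
    have hWW : W * W = Φ X := by rw [← pow_two, cfc_sqrt_sq hXp.posSemidef.nonneg]
    rw [hΨ_apply, mul_one, ← pow_two, cfc_sqrt_sq hX.posSemidef.nonneg, ← hWW,
      nonsing_inv_mul_cancel_left _ _ hW, mul_nonsing_inv _ hW]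
  have hT : 0 ≤ T := cfc_nonneg fun x _ => Real.sqrt_nonneg x
  have hTT : T ^ 2 = S⁻¹ * Y * S⁻¹ :=
    cfc_sqrt_sq (hSinv.conjugate_nonneg hY.posSemidef.nonneg)
  have hΨT2 : Ψ (T ^ 2) = W⁻¹ * Φ Y * W⁻¹ := by
    rw [hΨ_apply, hTT, mul_conj_nonsing_inv_mul_cancel hS]
  have hΦG : Φ (geoMean X Y) = W * Ψ T * W := by
    rw [hΨ_apply, mul_conj_nonsing_inv_mul_cancel hW]
    rfl
  rw [← le_iff, hΦG]
  refine mul_mul_le_geoMean (hΨ T hT) ?_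
  exact hΨT2 ▸
    sq_map_le_map_sq_of_spectrum_finite Ψ hΨ hΨ1 hT.isSelfAdjoint T.finite_real_spectrum

/-- A positive linear map is subadditive with respect to the geometric mean:
`Φ(X # Y) ≤ Φ(X) # Φ(Y)` in the Loewner order. -/
theorem posMap_geoMean {m n : ℕ}
    (Φ : Matrix (Fin m) (Fin m) ℂ →ₗ[ℂ] Matrix (Fin n) (Fin n) ℂ)
    (hΦ : ∀ A : Matrix (Fin m) (Fin m) ℂ, A.PosSemidef → (Φ A).PosSemidef)
    (X Y : Matrix (Fin m) (Fin m) ℂ) (hX : X.PosDef) (hY : Y.PosDef)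
    (hXp : (Φ X).PosDef) (hYp : (Φ Y).PosDef) :
    (geoMean (Φ X) (Φ Y) - Φ (geoMean X Y)).PosSemidef :=
  posMap_geoMean_general Φ hΦ X Y hX hY hXp
end

section
/- Let λ, μ ≥ 0, f₁(x) = 1/(λ+x), f₂(x) = 1/(μ+x). Let Φ : Mₘ(ℂ) → Mₙ(ℂ) be a positive linear map and K ∈ Mₙ(ℂ). Then the map X ↦ Tr(Φ(f₁(X)) K* Φ(f₂(X)) K) is convex on positive definite m×m matrices. -/
/-!
Put `F(A, B) = Re Tr(Φ(A) K* Φ(B) K)`: a real bilinear form that is nonnegative on pairs of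
positive semidefinite matrices. The claim is the joint convexity of `(A₁, A₂) ↦ F(A₁⁻¹, A₂⁻¹)` on
pairs of positive definite matrices, at `A₁ = λ + X`, `A₂ = μ + X`.

A congruence by `W^{-1/2}` followed by a unitary diagonalization gives, for a positive
semidefinite `D` and a positive definite `W`, positive semidefinite `Pₖ` and reals `uₖ ≥ 0` with
`D = ∑ uₖ Pₖ`, `DWD = ∑ uₖ² Pₖ` and `W⁻¹ = ∑ Pₖ`. Expanding `F` in two such decompositions and
using AM-GM, `3uv ≤ u²v + uv² + 1`, termwise yields
`3 F(D₁, D₂) ≤ F(D₁W₁D₁, D₂) + F(D₁, D₂W₂D₂) + F(W₁⁻¹, W₂⁻¹)`.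
Take `Dᵢ = Cᵢ⁻¹` with `Cᵢ = tAᵢ + (1 - t)Bᵢ` and average the cases `Wᵢ = Aᵢ` and `Wᵢ = Bᵢ` with
weights `t` and `1 - t`: since `Cᵢ⁻¹ Cᵢ Cᵢ⁻¹ = Cᵢ⁻¹`, the first two terms on the right become
`F(C₁⁻¹, C₂⁻¹)` each, and what remains is the convexity inequality.
-/

open Matrix ComplexOrder

section Bilinear

variable {M M' ι κ : Type*} [AddCommGroup M] [Module ℝ M] [AddCommGroup M'] [Module ℝ M']
  [Fintype ι] [Fintype κ]

theorem LinearMap.three_mul_apply_sum_smul_le (F : M →ₗ[ℝ] M' →ₗ[ℝ] ℝ) {P : ι → M} {Q : κ → M'}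
    (hPQ : ∀ i j, 0 ≤ F (P i) (Q j)) {u : ι → ℝ} {v : κ → ℝ} (hu : ∀ i, 0 ≤ u i)
    (hv : ∀ j, 0 ≤ v j) :
    3 * F (∑ i, u i • P i) (∑ j, v j • Q j) ≤
      F (∑ i, u i ^ 2 • P i) (∑ j, v j • Q j) + F (∑ i, u i • P i) (∑ j, v j ^ 2 • Q j) +
        F (∑ i, P i) (∑ j, Q j) := by
  have expand (a : ι → ℝ) (b : κ → ℝ) :
      F (∑ i, a i • P i) (∑ j, b j • Q j) = ∑ i, ∑ j, a i * b j * F (P i) (Q j) := by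
    simp only [map_sum, LinearMap.sum_apply, map_smul, LinearMap.smul_apply, smul_eq_mul,
      Finset.mul_sum]
    rw [Finset.sum_comm]
    exact Finset.sum_congr rfl fun _ _ => Finset.sum_congr rfl fun _ _ => by ring
  -- AM-GM for the three numbers `x²y`, `xy²`, `1`
  have amgm (x y : ℝ) (hx : 0 ≤ x) (hy : 0 ≤ y) : 3 * (x * y) ≤ x ^ 2 * y + x * y ^ 2 + 1 := by
    nlinarith [sq_nonneg (x - 1), sq_nonneg (y - 1), sq_nonneg (x - y), sq_nonneg (x * y - 1),
      mul_nonneg hx hy, mul_nonneg hx (sq_nonneg (y - 1)), mul_nonneg hy (sq_nonneg (x - 1))]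
  have hP : ∑ i, P i = ∑ i, (fun _ => (1 : ℝ)) i • P i := by simp
  have hQ : ∑ j, Q j = ∑ j, (fun _ => (1 : ℝ)) j • Q j := by simp
  rw [hP, hQ, expand, expand, expand, expand, Finset.mul_sum]
  simp only [← Finset.sum_add_distrib, Finset.mul_sum]
  refine Finset.sum_le_sum fun i _ => Finset.sum_le_sum fun j _ => ?_
  nlinarith [mul_le_mul_of_nonneg_right (amgm _ _ (hu i) (hv j)) (hPQ i j)]

end Bilinear

namespace Matrix

theorem convex_setOf_posDef {𝕜 n : Type*} [RCLike 𝕜] :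
    Convex ℝ {A : Matrix n n 𝕜 | A.PosDef} := by
  intro A hA B hB a b ha hb hab
  rcases ha.eq_or_lt with rfl | ha
  · simpa [show b = 1 by linarith] using hB
  · exact (PosDef.smul hA ha).add_posSemidef (hB.posSemidef.smul hb)

variable {𝕜 : Type*} [RCLike 𝕜] {n n' : Type*} [Fintype n] [DecidableEq n] [Fintype n']
  [DecidableEq n']

theorem PosSemidef.trace_mul_nonneg {S T : Matrix n n 𝕜} (hS : S.PosSemidef)
    (hT : T.PosSemidef) : 0 ≤ (S * T).trace := by
  open scoped MatrixOrder in
  obtain ⟨R, hR, rfl⟩ : ∃ R : Matrix n n 𝕜, R.PosSemidef ∧ R * R = S :=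
    ⟨CFC.sqrt S, (CFC.sqrt_nonneg S).posSemidef, CFC.sqrt_mul_sqrt_self S hS.nonneg⟩
  have h := hT.conjTranspose_mul_mul_same R
  rw [hR.isHermitian.eq] at h
  rw [Matrix.mul_assoc, trace_mul_comm]
  exact h.trace_nonneg

theorem IsHermitian.exists_posSemidef_pow_eq_sum {N : Matrix n n 𝕜} (hN : N.IsHermitian) :
    ∃ E : n → Matrix n n 𝕜, (∀ k, (E k).PosSemidef) ∧
      ∀ j : ℕ, N ^ j = ∑ k, hN.eigenvalues k ^ j • E k := by
  let U : Matrix n n 𝕜 := hN.eigenvectorUnitary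
  refine ⟨fun k => U * single k k 1 * star U, fun k => ?_, fun j => ?_⟩
  · refine PosSemidef.mul_mul_conjTranspose_same ?_ _
    rw [← diagonal_single, posSemidef_diagonal_iff]
    intro i
    rcases eq_or_ne i k with rfl | h <;> simp [*]
  · conv_lhs => rw [hN.spectral_theorem]
    rw [← map_pow, diagonal_pow, ← sum_single_eq_diagonal]
    simp only [map_sum, Unitary.conjStarAlgAut_apply, Pi.pow_apply, Function.comp_apply]
    refine Finset.sum_congr rfl fun k _ => ?_
    rw [← smul_mul_assoc, ← mul_smul_comm, smul_single, RCLike.real_smul_eq_coe_mul, mul_one,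
      RCLike.ofReal_pow]

open scoped MatrixOrder in
theorem PosSemidef.exists_sum_smul_of_posDef {D W : Matrix n n 𝕜} (hD : D.PosSemidef)
    (hW : W.PosDef) :
    ∃ (u : n → ℝ) (P : n → Matrix n n 𝕜), (∀ k, 0 ≤ u k) ∧ (∀ k, (P k).PosSemidef) ∧
      D = ∑ k, u k • P k ∧ D * W * D = ∑ k, u k ^ 2 • P k ∧ W⁻¹ = ∑ k, P k := by
  set V := CFC.sqrt W
  have hVV : V * V = W := CFC.sqrt_mul_sqrt_self W hW.posSemidef.nonneg
  have hV : V.IsHermitian := (CFC.sqrt_nonneg W).posSemidef.isHermitian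
  have : Invertible V := (CFC.isUnit_sqrt_iff_isStrictlyPositive.mpr
    (isStrictlyPositive_iff_posDef.mpr hW)).invertible
  have hN : (V * D * V).PosSemidef := by
    simpa only [hV.eq] using hD.conjTranspose_mul_mul_same V
  obtain ⟨E, hE, hNE⟩ := hN.isHermitian.exists_posSemidef_pow_eq_sum
  have hsum (j : ℕ) :
      V⁻¹ * (V * D * V) ^ j * V⁻¹ = ∑ k, hN.1.eigenvalues k ^ j • (V⁻¹ * E k * V⁻¹) := by
    simp [hNE, Finset.mul_sum, Finset.sum_mul]
  refine ⟨hN.1.eigenvalues, fun k => V⁻¹ * E k * V⁻¹, hN.eigenvalues_nonneg,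
    fun k => ?_, ?_, ?_, ?_⟩
  · simpa only [hV.inv.eq] using (hE k).conjTranspose_mul_mul_same V⁻¹
  · simpa [Matrix.mul_assoc] using hsum 1
  · simpa [Matrix.mul_assoc, sq, ← hVV] using hsum 2
  · simpa [← hVV, Matrix.mul_inv_rev] using hsum 0

theorem three_mul_apply_le_of_posSemidef (F : Matrix n n 𝕜 →ₗ[ℝ] Matrix n' n' 𝕜 →ₗ[ℝ] ℝ)
    (hF : ∀ P Q, P.PosSemidef → Q.PosSemidef → 0 ≤ F P Q) {D₁ W₁ : Matrix n n 𝕜}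
    {D₂ W₂ : Matrix n' n' 𝕜} (hD₁ : D₁.PosSemidef) (hW₁ : W₁.PosDef) (hD₂ : D₂.PosSemidef)
    (hW₂ : W₂.PosDef) :
    3 * F D₁ D₂ ≤ F (D₁ * W₁ * D₁) D₂ + F D₁ (D₂ * W₂ * D₂) + F W₁⁻¹ W₂⁻¹ := by
  obtain ⟨u, P, hu, hP, rfl, hPW, hPinv⟩ := hD₁.exists_sum_smul_of_posDef hW₁
  obtain ⟨v, Q, hv, hQ, rfl, hQW, hQinv⟩ := hD₂.exists_sum_smul_of_posDef hW₂
  rw [hPW, hQW, hPinv, hQinv]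
  exact F.three_mul_apply_sum_smul_le (fun i j => hF _ _ (hP i) (hQ j)) hu hv

theorem apply_inv_smul_add_smul_le (F : Matrix n n 𝕜 →ₗ[ℝ] Matrix n' n' 𝕜 →ₗ[ℝ] ℝ)
    (hF : ∀ P Q, P.PosSemidef → Q.PosSemidef → 0 ≤ F P Q) {A₁ B₁ : Matrix n n 𝕜}
    {A₂ B₂ : Matrix n' n' 𝕜} (hA₁ : A₁.PosDef) (hB₁ : B₁.PosDef) (hA₂ : A₂.PosDef)
    (hB₂ : B₂.PosDef) {t : ℝ} (ht₀ : 0 ≤ t) (ht₁ : t ≤ 1) :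
    F (t • A₁ + (1 - t) • B₁)⁻¹ (t • A₂ + (1 - t) • B₂)⁻¹ ≤
      t * F A₁⁻¹ A₂⁻¹ + (1 - t) * F B₁⁻¹ B₂⁻¹ := by
  set C₁ := t • A₁ + (1 - t) • B₁
  set C₂ := t • A₂ + (1 - t) • B₂
  have hC₁ : C₁.PosDef := convex_setOf_posDef hA₁ hB₁ ht₀ (sub_nonneg.2 ht₁) (by ring)
  have hC₂ : C₂.PosDef := convex_setOf_posDef hA₂ hB₂ ht₀ (sub_nonneg.2 ht₁) (by ring)
  have hA := three_mul_apply_le_of_posSemidef F hF hC₁.inv.posSemidef hA₁ hC₂.inv.posSemidef hA₂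
  have hB := three_mul_apply_le_of_posSemidef F hF hC₁.inv.posSemidef hB₁ hC₂.inv.posSemidef hB₂
  have hCC₁ : C₁⁻¹ * C₁ * C₁⁻¹ = C₁⁻¹ := by
    rw [nonsing_inv_mul _ ((isUnit_iff_isUnit_det _).mp hC₁.isUnit), Matrix.one_mul]
  have hCC₂ : C₂⁻¹ * C₂ * C₂⁻¹ = C₂⁻¹ := by
    rw [nonsing_inv_mul _ ((isUnit_iff_isUnit_det _).mp hC₂.isUnit), Matrix.one_mul]
  have h₁ : t * F (C₁⁻¹ * A₁ * C₁⁻¹) C₂⁻¹ + (1 - t) * F (C₁⁻¹ * B₁ * C₁⁻¹) C₂⁻¹ =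
      F C₁⁻¹ C₂⁻¹ := by
    conv_rhs => rw [← hCC₁]
    simp [C₁, Matrix.mul_add, Matrix.add_mul]
  have h₂ : t * F C₁⁻¹ (C₂⁻¹ * A₂ * C₂⁻¹) + (1 - t) * F C₁⁻¹ (C₂⁻¹ * B₂ * C₂⁻¹) =
      F C₁⁻¹ C₂⁻¹ := by
    conv_rhs => rw [← hCC₂]
    simp [C₂, Matrix.mul_add, Matrix.add_mul]
  nlinarith [mul_le_mul_of_nonneg_left hA ht₀, mul_le_mul_of_nonneg_left hB (sub_nonneg.2 ht₁)]

noncomputable def reTraceSandwich (K : Matrix n n 𝕜) :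
    Matrix n n 𝕜 →ₗ[ℝ] Matrix n n 𝕜 →ₗ[ℝ] ℝ :=
  LinearMap.mk₂ ℝ (fun S T => RCLike.re (S * Kᴴ * T * K).trace)
    (fun _ _ _ => by simp [Matrix.add_mul])
    (fun _ _ _ => by simp [RCLike.smul_re])
    (fun _ _ _ => by simp [Matrix.add_mul, Matrix.mul_add])
    (fun _ _ _ => by simp [RCLike.smul_re])

theorem reTraceSandwich_nonneg (K : Matrix n n 𝕜) {S T : Matrix n n 𝕜} (hS : S.PosSemidef)
    (hT : T.PosSemidef) : 0 ≤ reTraceSandwich K S T := by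
  have h := hS.trace_mul_nonneg (hT.conjTranspose_mul_mul_same K)
  rw [← Matrix.mul_assoc, ← Matrix.mul_assoc] at h
  exact (RCLike.nonneg_iff.mp h).1

end Matrix

/-- For `f₁(x) = 1/(λ+x)`, `f₂(x) = 1/(μ+x)`, a positive linear map `Φ` and a
matrix `K`, the map `X ↦ Tr(Φ(f₁(X)) K* Φ(f₂(X)) K)` is convex on positive
definite matrices (the trace being real-valued). -/
theorem trace_resolvent_convex {m n : ℕ} (l μ : ℝ) (hl : 0 ≤ l) (hμ : 0 ≤ μ)
    (Φ : Matrix (Fin m) (Fin m) ℂ →ₗ[ℂ] Matrix (Fin n) (Fin n) ℂ)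
    (hΦ : ∀ A : Matrix (Fin m) (Fin m) ℂ, A.PosSemidef → (Φ A).PosSemidef)
    (K : Matrix (Fin n) (Fin n) ℂ)
    (X Y : Matrix (Fin m) (Fin m) ℂ) (hX : X.PosDef) (hY : Y.PosDef)
    (t : ℝ) (ht0 : 0 ≤ t) (ht1 : t ≤ 1) :
    ((Φ (((l : ℂ) • 1 + (t • X + (1 - t) • Y))⁻¹) * Kᴴ *
        Φ (((μ : ℂ) • 1 + (t • X + (1 - t) • Y))⁻¹) * K).trace).re ≤
      t * ((Φ (((l : ℂ) • 1 + X)⁻¹) * Kᴴ * Φ (((μ : ℂ) • 1 + X)⁻¹) * K).trace).re +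
      (1 - t) * ((Φ (((l : ℂ) • 1 + Y)⁻¹) * Kᴴ * Φ (((μ : ℂ) • 1 + Y)⁻¹) * K).trace).re := by
  let F := (reTraceSandwich K).compl₁₂ (Φ.restrictScalars ℝ) (Φ.restrictScalars ℝ)
  have hF (P Q : Matrix (Fin m) (Fin m) ℂ) (hP : P.PosSemidef) (hQ : Q.PosSemidef) :
      0 ≤ F P Q :=
    reTraceSandwich_nonneg K (hΦ P hP) (hΦ Q hQ)
  have hshift {c : ℝ} (hc : 0 ≤ c) {Z : Matrix (Fin m) (Fin m) ℂ} (hZ : Z.PosDef) :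
      ((c : ℂ) • 1 + Z).PosDef :=
    PosDef.posSemidef_add (PosSemidef.one.smul (Complex.zero_le_real.mpr hc)) hZ
  have hcomb (c : ℂ) :
      t • (c • 1 + X) + (1 - t) • (c • 1 + Y) = c • 1 + (t • X + (1 - t) • Y) := by
    module
  rw [← hcomb, ← hcomb]
  exact apply_inv_smul_add_smul_le F hF (hshift hl hX) (hshift hl hY) (hshift hμ hX)
    (hshift hμ hY) ht0 ht1
end

section
/- Let τ be the trace on Mₙ(ℂ), and let c₁, c₂ be positive definite and d₁, d₂ Hermitian matrices. Then 2 τ(c₁ d₁² c₁ c₂² + c₁ d₁ c₁ c₂ d₂ c₂ + c₁² c₂ d₂² c₂) ≥ 0. -/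
open Matrix ComplexOrder

/-- For `c₁, c₂` positive definite and `d₁, d₂` Hermitian,
`2 Tr(c₁d₁²c₁c₂² + c₁d₁c₁c₂d₂c₂ + c₁²c₂d₂²c₂) ≥ 0`. -/
theorem trace_sum_nonneg {n : ℕ} (c₁ c₂ d₁ d₂ : Matrix (Fin n) (Fin n) ℂ)
    (hc₁ : c₁.PosDef) (hc₂ : c₂.PosDef)
    (hd₁ : d₁.IsHermitian) (hd₂ : d₂.IsHermitian) :
    0 ≤ ((2 : ℂ) * (c₁ * d₁ ^ 2 * c₁ * c₂ ^ 2 + c₁ * d₁ * c₁ * c₂ * d₂ * c₂ +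
        c₁ ^ 2 * c₂ * d₂ ^ 2 * c₂).trace).re := by
  have tr_nn : ∀ A : Matrix (Fin n) (Fin n) ℂ, 0 ≤ ((Aᴴ*A).trace).re := by
    intro A
    have h : (Aᴴ*A).trace = ∑ i, ∑ j, (starRingEnd ℂ) (A j i) * A j i := by
      simp [Matrix.trace, Matrix.mul_apply, Matrix.conjTranspose_apply, Matrix.diag]
    rw [h]
    simp only [Complex.re_sum]
    apply Finset.sum_nonneg; intro i _
    apply Finset.sum_nonneg; intro j _
    simp [Complex.mul_re]
    nlinarith [sq_nonneg (A j i).re, sq_nonneg (A j i).im]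
  have hAH : (d₁*c₁*c₂ + c₁*c₂*d₂)ᴴ = c₂*c₁*d₁ + d₂*c₂*c₁ := by
    simp [conjTranspose_add, conjTranspose_mul, hc₁.1.eq, hc₂.1.eq, hd₁.eq, hd₂.eq, mul_assoc]
  have hB₁H : (d₁*c₁*c₂)ᴴ = c₂*c₁*d₁ := by
    simp [conjTranspose_mul, hc₁.1.eq, hc₂.1.eq, hd₁.eq, mul_assoc]
  have hB₂H : (d₂*c₂*c₁)ᴴ = c₁*c₂*d₂ := by
    simp [conjTranspose_mul, hc₁.1.eq, hc₂.1.eq, hd₂.eq, mul_assoc]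
  have e1 : ((c₂*c₁*d₁) * (d₁*c₁*c₂)).trace = (c₁*d₁^2*c₁*c₂^2).trace := by
    rw [show (c₂*c₁*d₁) * (d₁*c₁*c₂) = c₂ * (c₁*d₁^2*c₁*c₂) by noncomm_ring,
      trace_mul_comm, show (c₁*d₁^2*c₁*c₂) * c₂ = c₁*d₁^2*c₁*c₂^2 by noncomm_ring]
  have e2 : ((c₂*c₁*d₁) * (c₁*c₂*d₂)).trace = (c₁*d₁*c₁*c₂*d₂*c₂).trace := by
    rw [show (c₂*c₁*d₁) * (c₁*c₂*d₂) = c₂ * (c₁*d₁*c₁*c₂*d₂) by noncomm_ring,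
      trace_mul_comm, show (c₁*d₁*c₁*c₂*d₂) * c₂ = c₁*d₁*c₁*c₂*d₂*c₂ by noncomm_ring]
  have e3 : ((d₂*c₂*c₁) * (d₁*c₁*c₂)).trace = (c₁*d₁*c₁*c₂*d₂*c₂).trace := by
    rw [show (d₂*c₂*c₁) * (d₁*c₁*c₂) = (d₂*c₂) * (c₁*d₁*c₁*c₂) by noncomm_ring,
      trace_mul_comm, show (c₁*d₁*c₁*c₂) * (d₂*c₂) = c₁*d₁*c₁*c₂*d₂*c₂ by noncomm_ring]
  have e4 : ((d₂*c₂*c₁) * (c₁*c₂*d₂)).trace = (c₁^2*c₂*d₂^2*c₂).trace := by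
    rw [show (d₂*c₂*c₁) * (c₁*c₂*d₂) = (d₂*c₂) * (c₁^2*c₂*d₂) by noncomm_ring,
      trace_mul_comm, show (c₁^2*c₂*d₂) * (d₂*c₂) = c₁^2*c₂*d₂^2*c₂ by noncomm_ring]
  have e5 : ((c₁*c₂*d₂) * (d₂*c₂*c₁)).trace = (c₁^2*c₂*d₂^2*c₂).trace := by
    rw [show (c₁*c₂*d₂) * (d₂*c₂*c₁) = (c₁*c₂*d₂^2*c₂) * c₁ by noncomm_ring,
      trace_mul_comm, show c₁ * (c₁*c₂*d₂^2*c₂) = c₁^2*c₂*d₂^2*c₂ by noncomm_ring]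
  have key : (2 : ℂ) * (c₁ * d₁ ^ 2 * c₁ * c₂ ^ 2 + c₁ * d₁ * c₁ * c₂ * d₂ * c₂ +
        c₁ ^ 2 * c₂ * d₂ ^ 2 * c₂).trace
      = ((c₂*c₁*d₁ + d₂*c₂*c₁) * (d₁*c₁*c₂ + c₁*c₂*d₂)).trace
        + ((c₂*c₁*d₁) * (d₁*c₁*c₂)).trace + ((c₁*c₂*d₂) * (d₂*c₂*c₁)).trace := by
    simp only [add_mul, mul_add, trace_add]
    rw [e1, e2, e3, e4, e5]
    ring
  rw [key, Complex.add_re, Complex.add_re]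
  have h1 := tr_nn (d₁*c₁*c₂ + c₁*c₂*d₂)
  have h2 := tr_nn (d₁*c₁*c₂)
  have h3 := tr_nn (d₂*c₂*c₁)
  rw [hAH] at h1; rw [hB₁H] at h2; rw [hB₂H] at h3
  linarith
end

section
/- Kadison's inequality: if Φ : Mₘ(ℂ) → Mₙ(ℂ) is a unital positive linear map and b is a Hermitian matrix, then Φ(b²) ≥ Φ(b)² in the Loewner order. -/
/-!
Diagonalise `b = ∑ λᵢ Pᵢ` with `Pᵢ ≥ 0`, `∑ Pᵢ = 1` and `b² = ∑ λᵢ² Pᵢ`. The matrices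
`Qᵢ = Φ(Pᵢ)` are again positive with `∑ Qᵢ = 1`, and for `S = Φ(b) = ∑ λᵢ Qᵢ` the expansion
`∑ (λᵢ - S) Qᵢ (λᵢ - S) = ∑ λᵢ² Qᵢ - 2 S² + S (∑ Qᵢ) S` shows that `Φ(b²) - Φ(b)²` is a sum of
positive matrices.
-/

open Matrix ComplexOrder
open scoped MatrixOrder

theorem sum_sq_smul_sub_sq_eq_sum_mul_mul {R A ι : Type*} [CommRing R] [Ring A] [Algebra R A]
    (s : Finset ι) (Q : ι → A) (hQ : ∑ i ∈ s, Q i = 1) (c : ι → R) :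
    ∑ i ∈ s, c i ^ 2 • Q i - (∑ i ∈ s, c i • Q i) ^ 2 =
      ∑ i ∈ s, (algebraMap R A (c i) - ∑ j ∈ s, c j • Q j) * Q i *
        (algebraMap R A (c i) - ∑ j ∈ s, c j • Q j) := by
  set S := ∑ j ∈ s, c j • Q j
  have expand (i : ι) : (algebraMap R A (c i) - S) * Q i * (algebraMap R A (c i) - S) =
      c i ^ 2 • Q i - (c i • Q i) * S - S * (c i • Q i) + S * Q i * S := by
    simp only [sub_mul, mul_sub, Algebra.smul_def, map_pow, mul_assoc,
      ← Algebra.commutes (c i) (Q i)]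
    noncomm_ring
  simp only [expand, Finset.sum_add_distrib, Finset.sum_sub_distrib, ← Finset.sum_mul,
    ← Finset.mul_sum, hQ]
  noncomm_ring

theorem sq_sum_smul_le_sum_sq_smul_s15 {A ι : Type*} [Ring A] [PartialOrder A] [StarRing A]
    [StarOrderedRing A] [Algebra ℝ A] [StarModule ℝ A]
    (s : Finset ι) (Q : ι → A) (hQ : ∀ i ∈ s, 0 ≤ Q i) (hQ1 : ∑ i ∈ s, Q i = 1) (c : ι → ℝ) :
    (∑ i ∈ s, c i • Q i) ^ 2 ≤ ∑ i ∈ s, c i ^ 2 • Q i := by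
  have hS : IsSelfAdjoint (∑ i ∈ s, c i • Q i) :=
    isSelfAdjoint_sum s fun i hi => (IsSelfAdjoint.all (c i)).smul (.of_nonneg (hQ i hi))
  rw [← sub_nonneg, sum_sq_smul_sub_sq_eq_sum_mul_mul s Q hQ1 c]
  exact Finset.sum_nonneg fun i hi =>
    (IsSelfAdjoint.algebraMap A (.all (c i))).sub hS |>.conjugate_nonneg (hQ i hi)

namespace Matrix.IsHermitian

variable {𝕜 n : Type*} [RCLike 𝕜] [Fintype n] [DecidableEq n] {A : Matrix n n 𝕜}

/-- The orthogonal projection onto the line spanned by `hA.eigenvectorBasis i`. -/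
noncomputable def eigenvectorProj (hA : A.IsHermitian) (i : n) : Matrix n n 𝕜 :=
  Unitary.conjStarAlgAut 𝕜 _ hA.eigenvectorUnitary (single i i 1)

theorem posSemidef_eigenvectorProj (hA : A.IsHermitian) (i : n) :
    (hA.eigenvectorProj i).PosSemidef := by
  refine PosSemidef.mul_mul_conjTranspose_same ?_ _
  rw [← diagonal_single, posSemidef_diagonal_iff]
  intro j
  rw [Pi.single_apply]
  split_ifs <;> simp

theorem sum_eigenvectorProj (hA : A.IsHermitian) : ∑ i, hA.eigenvectorProj i = 1 := by
  simp only [eigenvectorProj, ← map_sum, sum_single_one, map_one]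

theorem pow_eq_sum_eigenvectorProj (hA : A.IsHermitian) (k : ℕ) :
    A ^ k = ∑ i, hA.eigenvalues i ^ k • hA.eigenvectorProj i := by
  conv_lhs => rw [hA.spectral_theorem, ← map_pow, diagonal_pow, ← sum_single_eq_diagonal, map_sum]
  refine Finset.sum_congr rfl fun i _ => ?_
  rw [eigenvectorProj, RCLike.real_smul_eq_coe_smul (K := 𝕜), ← map_smul, smul_single,
    smul_eq_mul, mul_one]
  simp only [Pi.pow_apply, Function.comp_apply, RCLike.ofReal_pow]

end Matrix.IsHermitian

/-- Kadison's inequality: for a unital positive linear map `Φ` and Hermitian `b`,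
`Φ(b²) ≥ Φ(b)²` in the Loewner order. -/
theorem kadison_inequality {m n : ℕ}
    (Φ : Matrix (Fin m) (Fin m) ℂ →ₗ[ℂ] Matrix (Fin n) (Fin n) ℂ)
    (hΦ1 : Φ 1 = 1)
    (hΦ : ∀ A : Matrix (Fin m) (Fin m) ℂ, A.PosSemidef → (Φ A).PosSemidef)
    (b : Matrix (Fin m) (Fin m) ℂ) (hb : b.IsHermitian) :
    (Φ (b ^ 2) - (Φ b) ^ 2).PosSemidef := by
  have hΦ_pow (k : ℕ) : Φ (b ^ k) = ∑ i, hb.eigenvalues i ^ k • Φ (hb.eigenvectorProj i) := by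
    simp only [hb.pow_eq_sum_eigenvectorProj k, map_sum, LinearMap.map_smul_of_tower]
  have hΦb : Φ b = ∑ i, hb.eigenvalues i • Φ (hb.eigenvectorProj i) := by
    simpa using hΦ_pow 1
  rw [← Matrix.le_iff, hΦ_pow, hΦb]
  refine sq_sum_smul_le_sum_sq_smul_s15 _ _
    (fun i _ => (hΦ _ (hb.posSemidef_eigenvectorProj i)).nonneg) ?_ _
  rw [← map_sum, hb.sum_eigenvectorProj, hΦ1]
end
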